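/- (Lemma 5 on the Toda lattice, with the gauge factor as derived in its proof.) Let a > 0, let u(n,r,θ) be smooth in (r,θ) for each n ∈ ℤ, let g : ℝ → ℂ be continuous and G : ℝ → ℂ an antiderivative of g (G′ = g), and assume the boundary condition u_r(n,a,θ) = −(i/a)u_θ(n,a,θ) + g(θ) for all n ∈ ℤ and θ ∈ ℝ. If φ₂ : ℤ × ℝ → ℂ (differentiable in θ) satisfies equation (V2), then the function φ₄(n,θ) = e^{u(n,a,θ) + iaG(θ)}·φ₂(n,θ) satisfies equation (V4). -/

import Mathlib

/-- The radial partial derivative `u_r(n, a, θ)`. -/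
noncomputable def uR (u : ℤ → ℝ → ℝ → ℂ) (a : ℝ) (n : ℤ) (θ : ℝ) : ℂ :=
  deriv (fun r : ℝ => u n r θ) a

/-- The angular partial derivative `u_θ(n, a, θ)`. -/
noncomputable def uT (u : ℤ → ℝ → ℝ → ℂ) (a : ℝ) (n : ℤ) (θ : ℝ) : ℂ :=
  deriv (fun t : ℝ => u n a t) θ

/-- `ω(n, a, θ) = exp(u(n,a,θ) − u(n+1,a,θ))`. -/
noncomputable def om (u : ℤ → ℝ → ℝ → ℂ) (a : ℝ) (n : ℤ) (θ : ℝ) : ℂ :=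
  Complex.exp (u n a θ - u (n + 1) a θ)

/-- `u(n,·,·)` is smooth in `(r,θ)` on `{r > 0}` for every `n`. -/
def SmoothOnHalf (u : ℤ → ℝ → ℝ → ℂ) : Prop :=
  ∀ n : ℤ, ContDiffOn ℝ (⊤ : ℕ∞) (fun p : ℝ × ℝ => u n p.1 p.2) {p : ℝ × ℝ | 0 < p.1}

/-- Equation (V1): the θ-part, restricted to `r = a`, of the original Lax pair of the
polar two-dimensional Toda lattice. -/
def V1 (a : ℝ) (u : ℤ → ℝ → ℝ → ℂ) (φ : ℤ → ℝ → ℂ) : Prop :=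
  ∀ (n : ℤ) (θ : ℝ), HasDerivAt (φ n)
    (Complex.I * a * Complex.exp (Complex.I * θ) / 2 * φ (n + 1) θ
      - Complex.I * a / 2 * (uR u a n θ - Complex.I / a * uT u a n θ) * φ n θ
      + Complex.I * a * Complex.exp (-(Complex.I * θ)) / 2 * om u a (n - 1) θ * φ (n - 1) θ) θ

/-- Equation (V2): the θ-part, restricted to `r = a`, of the Lax pair obtained from the
reflection `θ → −θ`. -/
def V2 (a : ℝ) (u : ℤ → ℝ → ℝ → ℂ) (φ : ℤ → ℝ → ℂ) : Prop :=
  ∀ (n : ℤ) (θ : ℝ), HasDerivAt (φ n)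
    (Complex.I * a * Complex.exp (-(Complex.I * θ)) / 2 * φ (n + 1) θ
      - Complex.I * a / 2 * (uR u a n θ + Complex.I / a * uT u a n θ) * φ n θ
      + Complex.I * a * Complex.exp (Complex.I * θ) / 2 * om u a (n - 1) θ * φ (n - 1) θ) θ

/-- Equation (V3): the θ-part, restricted to `r = a`, of the Lax pair obtained from the
Kelvin transformation. -/
def V3 (a : ℝ) (u : ℤ → ℝ → ℝ → ℂ) (φ : ℤ → ℝ → ℂ) : Prop :=
  ∀ (n : ℤ) (θ : ℝ), HasDerivAt (φ n)
    (Complex.I * a * Complex.exp (Complex.I * θ) / 2 * φ (n + 1) θ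
      - Complex.I * a / 2 * (-uR u a n θ + 4 * n / a - Complex.I / a * uT u a n θ) * φ n θ
      + Complex.I * a * Complex.exp (-(Complex.I * θ)) / 2 * om u a (n - 1) θ * φ (n - 1) θ) θ

/-- Equation (V4): the θ-part, restricted to `r = a`, of the Lax pair obtained from the
reflection `ũ(n) = −u(−n)`. -/
def V4 (a : ℝ) (u : ℤ → ℝ → ℝ → ℂ) (φ : ℤ → ℝ → ℂ) : Prop :=
  ∀ (n : ℤ) (θ : ℝ), HasDerivAt (φ n)
    (Complex.I * a * Complex.exp (Complex.I * θ) / 2 * φ (n - 1) θ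
      - Complex.I * a / 2 * (-uR u a n θ + Complex.I / a * uT u a n θ) * φ n θ
      + Complex.I * a * Complex.exp (-(Complex.I * θ)) / 2 * om u a n θ * φ (n + 1) θ) θ

/-! The gauge factor `e^{u(n)}` turns the off-diagonal coefficients of (V2) into those of (V4),
since `ω(n) = e^{u(n) - u(n+1)}`; the extra factor `e^{iaG}` is a scalar, and the derivative
`u_θ + iag` of the total gauge exponent is exactly `ia u_r` by the boundary condition, which is
the difference of the diagonal coefficients of (V4) and (V2). -/

open Complex

theorem SmoothOnHalf.hasDerivAt_uT {u : ℤ → ℝ → ℝ → ℂ} (hu : SmoothOnHalf u) {a : ℝ}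
    (ha : 0 < a) (n : ℤ) (θ : ℝ) : HasDerivAt (fun t : ℝ => u n a t) (uT u a n θ) θ := by
  have hopen : IsOpen {p : ℝ × ℝ | 0 < p.1} := isOpen_lt continuous_const continuous_fst
  have hsmooth := (hu n).contDiffAt (hopen.mem_nhds (show (a, θ) ∈ {p : ℝ × ℝ | 0 < p.1} from ha))
  have hslice : ContDiffAt ℝ (⊤ : ℕ∞) (fun t : ℝ => (a, t)) θ :=
    (contDiff_const.prodMk contDiff_id).contDiffAt
  exact ((hsmooth.comp θ hslice).differentiableAt (by simp)).hasDerivAt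

theorem exp_add_sub_one_eq_mul_om (u : ℤ → ℝ → ℝ → ℂ) (a : ℝ) (n : ℤ) (θ : ℝ) (c : ℂ) :
    exp (u (n - 1) a θ + c) = exp (u n a θ + c) * om u a (n - 1) θ := by
  rw [om, ← exp_add, sub_add_cancel]
  ring_nf

theorem om_mul_exp_add_succ (u : ℤ → ℝ → ℝ → ℂ) (a : ℝ) (n : ℤ) (θ : ℝ) (c : ℂ) :
    om u a n θ * exp (u (n + 1) a θ + c) = exp (u n a θ + c) := by
  rw [om, ← exp_add]
  ring_nf

theorem toda_lemma5_general (a : ℝ) (ha : 0 < a) (u : ℤ → ℝ → ℝ → ℂ) (hu : SmoothOnHalf u)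
    (g G : ℝ → ℂ) (hG : ∀ θ : ℝ, HasDerivAt G (g θ) θ)
    (hbc : ∀ (n : ℤ) (θ : ℝ), uR u a n θ = -(Complex.I / a) * uT u a n θ + g θ)
    (φ₂ : ℤ → ℝ → ℂ) (hφ₂ : V2 a u φ₂) :
    V4 a u (fun n θ => Complex.exp (u n a θ + Complex.I * a * G θ) * φ₂ n θ) := by
  intro n θ
  have hgauge : HasDerivAt (fun t : ℝ => exp (u n a t + I * a * G t))
      (exp (u n a θ + I * a * G θ) * (uT u a n θ + I * a * g θ)) θ :=
    ((hu.hasDerivAt_uT ha n θ).add ((hG θ).const_mul (I * a))).cexp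
  have hradial : I * a * uR u a n θ = uT u a n θ + I * a * g θ := by
    have ha' : (a : ℂ) ≠ 0 := ofReal_ne_zero.mpr ha.ne'
    rw [hbc]
    field_simp
    linear_combination -(uT u a n θ) * I_sq
  refine (hgauge.mul (hφ₂ n θ)).congr_deriv ?_
  linear_combination -exp (u n a θ + I * a * G θ) * φ₂ n θ * hradial
    - I * a * exp (I * θ) / 2 * φ₂ (n - 1) θ * exp_add_sub_one_eq_mul_om u a n θ (I * a * G θ)
    - I * a * exp (-(I * θ)) / 2 * φ₂ (n + 1) θ * om_mul_exp_add_succ u a n θ (I * a * G θ)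

/-- Lemma 5 on the Toda lattice (with the gauge factor as derived in its proof): under
the boundary condition `u_r(n,a,θ) = −(i/a) u_θ(n,a,θ) + g(θ)`, if `φ₂` solves (V2)
then `φ₄(n,θ) = e^{u(n,a,θ) + iaG(θ)} φ₂(n,θ)` solves (V4), where `G′ = g`. -/
theorem toda_lemma5 (a : ℝ) (ha : 0 < a) (u : ℤ → ℝ → ℝ → ℂ) (hu : SmoothOnHalf u)
    (g G : ℝ → ℂ) (hg : Continuous g) (hG : ∀ θ : ℝ, HasDerivAt G (g θ) θ)
    (hbc : ∀ (n : ℤ) (θ : ℝ), uR u a n θ = -(Complex.I / a) * uT u a n θ + g θ)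
    (φ₂ : ℤ → ℝ → ℂ) (hφ₂ : V2 a u φ₂) :
    V4 a u (fun n θ => Complex.exp (u n a θ + Complex.I * a * G θ) * φ₂ n θ) :=
  toda_lemma5_general a ha u hu g G hG hbc φ₂ hφ₂
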